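/- Let ε ∈ (0,1/2), K ≥ 1, and n, k ∈ ℕ. If the weighted diamond W_n admits a K-embedding into some k-dimensional real Banach space (in particular into the k-dimensional Euclidean space ℓ₂^k), then 2^n ≤ (2K+1)^k; consequently, if the distortions of embeddings of W_n into ℓ₂^{k(n)} are uniformly bounded, then k(n) ≥ c·n for some constant c > 0. -/

import Mathlib

noncomputable section

open scoped ENNReal Classical

namespace Stmt

/-- Vertex set together with the (oriented) edge relation of the diamond graph `D n`. -/
def VE : ℕ → (V : Type) × (V → V → Prop)
  | 0 => ⟨Fin 2, fun u v => u = 0 ∧ v = 1⟩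
  | n + 1 =>
      ⟨(VE n).1 ⊕ ({e : (VE n).1 × (VE n).1 // (VE n).2 e.1 e.2} × Bool),
        fun u v =>
          ∃ (e : {e : (VE n).1 × (VE n).1 // (VE n).2 e.1 e.2}) (b : Bool),
            (u = Sum.inl e.1.1 ∧ v = Sum.inr (e, b)) ∨
            (u = Sum.inr (e, b) ∧ v = Sum.inl e.1.2)⟩

/-- Vertices of the diamond graph `D n` (equivalently, of the weighted diamond `W n`). -/
def Vert (n : ℕ) : Type := (VE n).1

/-- The (oriented) edge relation of the diamond graph `D n`. -/
def dEdge (n : ℕ) : Vert n → Vert n → Prop := (VE n).2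

/-- The edges of generation `k` inside the vertex set of `D n`: the edges of `D k`,
transported to `Vert n` via the canonical inclusions.  These are the edges of the
weighted diamond `W n`, which get weight `(1/2 + ε) ^ k`. -/
def edgeAt : (n : ℕ) → (k : ℕ) → Vert n → Vert n → Prop
  | 0, k => fun u v => k = 0 ∧ dEdge 0 u v
  | n + 1, k => fun u v =>
      (k = n + 1 ∧ dEdge (n + 1) u v) ∨
      (∃ u' v' : Vert n, u = Sum.inl u' ∧ v = Sum.inl v' ∧ edgeAt n k u' v')

/-- Edge weights of the weighted diamond `W n`:  the value is `(1/2 + ε) ^ k` if `{u, v}`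
is an edge of generation `k`, and `∞` if `{u, v}` is not an edge of `W n`. -/
def wCost (ε : ℝ) (n : ℕ) (u v : Vert n) : ℝ≥0∞ :=
  ⨅ (k : ℕ) (_ : edgeAt n k u v ∨ edgeAt n k v u), ENNReal.ofReal ((1 / 2 + ε) ^ k)

/-- Total weight of a walk, recorded as the list of visited vertices. -/
def walkCost {V : Type*} (c : V → V → ℝ≥0∞) : List V → ℝ≥0∞
  | [] => 0
  | [_] => 0
  | u :: v :: l => c u v + walkCost c (v :: l)

/-- The shortest-path (extended) distance associated to an edge-weight function `c`. -/
def spDist {V : Type*} (c : V → V → ℝ≥0∞) (u v : V) : ℝ≥0∞ :=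
  ⨅ p : { l : List V // l.head? = some u ∧ l.getLast? = some v }, walkCost c p.1

/-- The shortest-path metric `d_{W_n}` of the weighted diamond `W n` (with parameter `ε`). -/
def dW (ε : ℝ) (n : ℕ) (u v : Vert n) : ℝ :=
  (spDist (wCost ε n) u v).toReal

/-- `embedsM K dV dY` : there is a map of distortion at most `K` from the space with distance
function `dV` to the space with distance function `dY`. -/
def embedsM {V Y : Type*} (K : ℝ) (dV : V → V → ℝ) (dY : Y → Y → ℝ) : Prop :=
  ∃ f : V → Y, Function.Injective f ∧ ∃ r : ℝ, 0 < r ∧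
    ∀ a b, r * dV a b ≤ dY (f a) (f b) ∧ dY (f a) (f b) ≤ K * (r * dV a b)

/-!
The `2 ^ n` neighbours of the root of `D n` are pairwise at distance exactly `2 (1/2 + ε) ^ n` in
`W n`: every edge of `W n` weighs at least `(1/2 + ε) ^ n`, no two of these vertices are adjacent,
and the root is a common neighbour. A `K`-embedding turns them into `2 ^ n` points with mutual
distances between `s` and `K s`; the disjoint balls of radius `s / 2` around them lie in one ball
of radius `(2K + 1) s / 2`, and comparing Haar volumes gives `2 ^ n ≤ (2K + 1) ^ k`. Taking
logarithms, `k ≥ n log 2 / log (2K + 1)`.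
-/

open MeasureTheory Metric in
theorem card_le_of_separated_of_dist_le {X : Type*} [NormedAddCommGroup X] [NormedSpace ℝ X]
    [FiniteDimensional ℝ X] {ι : Type*} [Fintype ι] (q : ι → X) {s K : ℝ} (hs : 0 < s)
    (hK : 0 ≤ K) (hsep : Pairwise fun i j => s ≤ dist (q i) (q j))
    (hdiam : Pairwise fun i j => dist (q i) (q j) ≤ K * s) :
    (Fintype.card ι : ℝ) ≤ (2 * K + 1) ^ Module.finrank ℝ X := by
  rcases isEmpty_or_nonempty ι with hι | ⟨⟨i₀⟩⟩
  · simp only [Fintype.card_of_isEmpty, Nat.cast_zero]; positivity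
  borelize X
  set μ : Measure X := Measure.addHaar
  have hdisj : Set.PairwiseDisjoint (Finset.univ : Finset ι) fun i => ball (q i) (s / 2) :=
    fun i _ j _ hij => ball_disjoint_ball (by linarith [hsep hij])
  have hsub : ∀ i, ball (q i) (s / 2) ⊆ ball (q i₀) ((2 * K + 1) * (s / 2)) := by
    intro i
    refine ball_subset_ball' ?_
    rcases eq_or_ne i i₀ with rfl | hi
    · simp only [dist_self]; nlinarith
    · linarith [hdiam hi]
  have hvol : (Fintype.card ι : ℝ≥0∞) * μ (ball 0 (s / 2))
      ≤ ENNReal.ofReal ((2 * K + 1) ^ Module.finrank ℝ X) * μ (ball 0 (s / 2)) := by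
    calc (Fintype.card ι : ℝ≥0∞) * μ (ball 0 (s / 2))
        = ∑ i, μ (ball (q i) (s / 2)) := by
          simp [Measure.addHaar_ball_center]
      _ = μ (⋃ i ∈ (Finset.univ : Finset ι), ball (q i) (s / 2)) :=
          (measure_biUnion_finset hdisj fun i _ => measurableSet_ball).symm
      _ ≤ μ (ball (q i₀) ((2 * K + 1) * (s / 2))) :=
          measure_mono (Set.iUnion₂_subset fun i _ => hsub i)
      _ = _ := Measure.addHaar_ball_mul_of_pos μ _ (by linarith) _
  have hcard := (ENNReal.mul_le_mul_iff_left (measure_ball_pos μ 0 (by linarith)).ne'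
    measure_ball_lt_top.ne).mp hvol
  rwa [← ENNReal.ofReal_natCast, ENNReal.ofReal_le_ofReal_iff (by positivity)] at hcard

theorem card_le_of_embedsM_of_dist_eq {V X : Type*} [NormedAddCommGroup X] [NormedSpace ℝ X]
    [FiniteDimensional ℝ X] {ι : Type*} [Fintype ι] {K δ : ℝ} (hK : 0 ≤ K) (hδ : 0 < δ)
    {dV : V → V → ℝ} (p : ι → V) (hp : Pairwise fun i j => dV (p i) (p j) = δ)
    (hemb : embedsM K dV fun a b : X => ‖a - b‖) :
    (Fintype.card ι : ℝ) ≤ (2 * K + 1) ^ Module.finrank ℝ X := by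
  obtain ⟨f, -, r, hr, hf⟩ := hemb
  refine card_le_of_separated_of_dist_le (f ∘ p) (mul_pos hr hδ) hK (fun i j hij => ?_)
    fun i j hij => ?_
  · simpa [dist_eq_norm, hp hij] using (hf (p i) (p j)).1
  · simpa [dist_eq_norm, hp hij] using (hf (p i) (p j)).2

section ShortestPath

variable {V : Type*} {c : V → V → ℝ≥0∞}

theorem spDist_le_add (x z y : V) : spDist c x y ≤ c x z + c z y :=
  (iInf_le _ ⟨[x, z, y], rfl, rfl⟩).trans (by simp [walkCost])

theorem two_mul_le_walkCost {m : ℝ≥0∞} (hm : ∀ u v, m ≤ c u v) {x y : V} (hxy : c x y = ⊤)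
    (hne : x ≠ y) :
    ∀ l : List V, l.head? = some x → l.getLast? = some y → 2 * m ≤ walkCost c l
  | [], hx, _ => by simp at hx
  | [a], hx, hy => by simp_all
  | [a, b], hx, hy => by simp_all [walkCost]
  | a :: b :: d :: l, _, _ => by
      rw [two_mul, walkCost, walkCost]
      exact add_le_add (hm a b) (le_add_right (hm b d))

theorem two_mul_le_spDist {m : ℝ≥0∞} (hm : ∀ u v, m ≤ c u v) {x y : V} (hxy : c x y = ⊤)
    (hne : x ≠ y) : 2 * m ≤ spDist c x y :=
  le_iInf fun l => two_mul_le_walkCost hm hxy hne l.1 l.2.1 l.2.2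

end ShortestPath

def root : (n : ℕ) → Vert n
  | 0 => (0 : Fin 2)
  | n + 1 => Sum.inl (root n)

def rootNbr : (n : ℕ) → (Fin n → Bool) → {v : Vert n // dEdge n (root n) v}
  | 0, _ => ⟨(1 : Fin 2), rfl, rfl⟩
  | n + 1, b =>
      ⟨Sum.inr (⟨(root n, (rootNbr n (Fin.init b)).1), (rootNbr n (Fin.init b)).2⟩,
          b (Fin.last n)),
        _, _, Or.inl ⟨rfl, rfl⟩⟩

theorem rootNbr_injective : ∀ n, Function.Injective (rootNbr n)
  | 0 => fun _ _ _ => Subsingleton.elim _ _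
  | n + 1 => fun b b' h => by
      obtain ⟨he, hlast⟩ := Prod.mk.inj (Sum.inr.inj (congrArg Subtype.val h))
      have hinit : Fin.init b = Fin.init b' :=
        rootNbr_injective n (Subtype.ext (congrArg (fun e => e.1.2) he))
      rw [← Fin.snoc_init_self b, ← Fin.snoc_init_self b', hinit, hlast]

theorem edgeAt_le : ∀ {n k : ℕ} {u v : Vert n}, edgeAt n k u v → k ≤ n
  | 0, _, _, _, h => h.1.le
  | _ + 1, _, _, _, .inl h => h.1.le
  | _ + 1, _, _, _, .inr ⟨_, _, _, _, h⟩ => (edgeAt_le h).trans (Nat.le_succ _)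

theorem edgeAt_self_of_dEdge : ∀ {n : ℕ} {u v : Vert n}, dEdge n u v → edgeAt n n u v
  | 0, _, _, h => ⟨rfl, h⟩
  | _ + 1, _, _, h => .inl ⟨rfl, h⟩

/- In `D (n + 1)` the neighbours of the root are midpoints of generation `n + 1`, and such a
midpoint is adjacent only to vertices of `D n`. -/
theorem not_edgeAt_rootNbr : ∀ {n k : ℕ} (b b' : Fin n → Bool),
    ¬ edgeAt n k (rootNbr n b).1 (rootNbr n b').1
  | 0, _, _, _, h => (by decide : (1 : Fin 2) ≠ 0) h.2.1
  | _ + 1, _, _, _, .inl ⟨_, _, _, h⟩ => by simp_all [rootNbr]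
  | _ + 1, _, _, _, .inr ⟨_, _, h, _⟩ => by simp [rootNbr] at h

section WeightedDiamond

variable {ε : ℝ} {n : ℕ}

theorem ofReal_pow_le_wCost (hε₀ : 0 ≤ 1 / 2 + ε) (hε₁ : 1 / 2 + ε ≤ 1) (u v : Vert n) :
    ENNReal.ofReal ((1 / 2 + ε) ^ n) ≤ wCost ε n u v :=
  le_iInf₂ fun _ h => ENNReal.ofReal_le_ofReal <|
    pow_le_pow_of_le_one hε₀ hε₁ (h.elim edgeAt_le edgeAt_le)

theorem wCost_le_of_dEdge {u v : Vert n} (h : dEdge n u v ∨ dEdge n v u) :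
    wCost ε n u v ≤ ENNReal.ofReal ((1 / 2 + ε) ^ n) :=
  iInf₂_le n (h.imp edgeAt_self_of_dEdge edgeAt_self_of_dEdge)

theorem wCost_rootNbr (b b' : Fin n → Bool) :
    wCost ε n (rootNbr n b).1 (rootNbr n b').1 = ⊤ :=
  iInf₂_eq_top.mpr fun _ h => (h.elim (not_edgeAt_rootNbr _ _) (not_edgeAt_rootNbr _ _)).elim

theorem dW_rootNbr (hε₀ : 0 ≤ 1 / 2 + ε) (hε₁ : 1 / 2 + ε ≤ 1) {b b' : Fin n → Bool}
    (hb : b ≠ b') : dW ε n (rootNbr n b).1 (rootNbr n b').1 = 2 * (1 / 2 + ε) ^ n := by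
  have hne : (rootNbr n b).1 ≠ (rootNbr n b').1 :=
    fun h => hb (rootNbr_injective n (Subtype.ext h))
  have hsp : spDist (wCost ε n) (rootNbr n b).1 (rootNbr n b').1
      = 2 * ENNReal.ofReal ((1 / 2 + ε) ^ n) := by
    refine le_antisymm ?_
      (two_mul_le_spDist (ofReal_pow_le_wCost hε₀ hε₁) (wCost_rootNbr b b') hne)
    calc spDist (wCost ε n) (rootNbr n b).1 (rootNbr n b').1
        ≤ wCost ε n (rootNbr n b).1 (root n) + wCost ε n (root n) (rootNbr n b').1 :=
          spDist_le_add _ _ _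
      _ ≤ 2 * ENNReal.ofReal ((1 / 2 + ε) ^ n) := by
          rw [two_mul]
          exact add_le_add (wCost_le_of_dEdge (.inr (rootNbr n b).2))
            (wCost_le_of_dEdge (.inl (rootNbr n b').2))
  rw [dW, hsp, ENNReal.toReal_mul, ENNReal.toReal_ofNat, ENNReal.toReal_ofReal (by positivity)]

theorem two_pow_le_of_embedsM {X : Type*} [NormedAddCommGroup X] [NormedSpace ℝ X]
    [FiniteDimensional ℝ X] {K : ℝ} (hε₀ : 0 < 1 / 2 + ε) (hε₁ : 1 / 2 + ε ≤ 1) (hK : 0 ≤ K)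
    (hemb : embedsM K (dW ε n) fun a b : X => ‖a - b‖) :
    (2 : ℝ) ^ n ≤ (2 * K + 1) ^ Module.finrank ℝ X := by
  simpa using card_le_of_embedsM_of_dist_eq hK (by positivity) (fun b => (rootNbr n b).1)
    (fun _ _ hb => dW_rootNbr hε₀.le hε₁ hb) hemb

end WeightedDiamond

theorem exists_pos_mul_le_of_pow_le {a b : ℝ} (ha : 1 < a) (hb : 1 < b) {k : ℕ → ℕ}
    (h : ∀ n, a ^ n ≤ b ^ k n) : ∃ c : ℝ, 0 < c ∧ ∀ n : ℕ, c * n ≤ k n := by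
  have hloga := Real.log_pos ha
  have hlogb := Real.log_pos hb
  refine ⟨Real.log a / Real.log b, by positivity, fun n => ?_⟩
  have hlog := Real.log_le_log (by positivity) (h n)
  rw [Real.log_pow, Real.log_pow] at hlog
  rw [div_mul_eq_mul_div, div_le_iff₀ hlogb]
  linarith

universe u

/-- If the weighted diamond `W n` admits a `K`-embedding into a
`k`-dimensional real Banach space, then `2^n ≤ (2K+1)^k`.  Consequently, if the distortions
of embeddings of `W n` into `ℓ₂^{k n}` are uniformly bounded, then `k n ≥ c * n` for some
constant `c > 0`. -/
theorem statement11 (ε : ℝ) (hε0 : 0 < ε) (hε : ε < 1 / 2) :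
    (∀ K : ℝ, 1 ≤ K → ∀ n k : ℕ,
      ∀ (X : Type u) [NormedAddCommGroup X] [NormedSpace ℝ X] [FiniteDimensional ℝ X],
        Module.finrank ℝ X = k →
        embedsM K (dW ε n) (fun a b : X => ‖a - b‖) →
        (2 : ℝ) ^ n ≤ (2 * K + 1) ^ k) ∧
    (∀ K : ℝ, 1 ≤ K → ∀ k : ℕ → ℕ,
      (∀ n : ℕ, embedsM K (dW ε n)
        (fun a b : EuclideanSpace ℝ (Fin (k n)) => ‖a - b‖)) →
      ∃ c : ℝ, 0 < c ∧ ∀ n : ℕ, c * (n : ℝ) ≤ (k n : ℝ)) := by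
  have hε₀ : 0 < 1 / 2 + ε := by linarith
  have hε₁ : 1 / 2 + ε ≤ 1 := by linarith
  refine ⟨fun K hK n k X _ _ _ hdim hemb => ?_, fun K hK k hemb => ?_⟩
  · exact hdim ▸ two_pow_le_of_embedsM hε₀ hε₁ (by linarith) hemb
  · have hbase : (1 : ℝ) < 2 * K + 1 := by linarith
    refine exists_pos_mul_le_of_pow_le one_lt_two hbase fun n => ?_
    simpa using two_pow_le_of_embedsM hε₀ hε₁ (by linarith) (hemb n)

end Stmt
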